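/- For every natural number k there exists an AF F and arguments a,b with a credulously accepted and b rejected under conflict-free semantics, such that the number of sets Z ⊆ A \ {a,b} with rank_{r-cf}(Z∪{a}) < rank_{r-cf}(Z∪{b}) is strictly smaller than the number of sets Z ⊆ A \ {a,b} with rank_{r-cf}(Z∪{b}) < rank_{r-cf}(Z∪{a}), the latter number being more than k times the former; consequently no social ranking function satisfying rank k-super majority for every k together with r-cf satisfies cf-Compatibility. -/

import Mathlib

/-- Strict part of a relation on sets of elements. -/
def strictPart {α : Type*} (r : Finset α → Finset α → Prop) (X Y : Finset α) : Prop :=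
  r X Y ∧ ¬ r Y X

/-- There is a strict chain `X₁ ⊐ X₂ ⊐ ⋯ ⊐ Xₙ ⊐ X` of length `n` above `X`. -/
def ChainAbove {α : Type*} (r : Finset α → Finset α → Prop) (X : Finset α) (n : ℕ) : Prop :=
  ∃ l : List (Finset α), l.length = n ∧ List.Chain' (strictPart r) (l ++ [X])

/-- The rank of a set: one plus the maximal length of a strict chain above it. -/
noncomputable def rank {α : Type*} (r : Finset α → Finset α → Prop) (X : Finset α) : ℕ :=
  sSup {n | ChainAbove r X n} + 1
/-- Strict part of a preorder on elements. -/
def sp {β : Type*} (p : β → β → Prop) (x y : β) : Prop := p x y ∧ ¬ p y x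

/-- A social ranking function maps rankings over sets to rankings over elements. -/
def SRF (α : Type*) := (Finset α → Finset α → Prop) → α → α → Prop

/-- Maximal rank of any set under `r`. -/
noncomputable def maxRank {α : Type*} (r : Finset α → Finset α → Prop) : ℕ :=
  sSup (Set.range (rank r))

/-- Pareto-efficiency of a social ranking function. -/
def ParetoEfficient {α : Type*} [DecidableEq α] (ξ : SRF α) : Prop :=
  ∀ r : Finset α → Finset α → Prop, ∀ x y : α,
    (∀ Z : Finset α, x ∉ Z → y ∉ Z → rank r (insert x Z) ≤ rank r (insert y Z)) →
    (∃ Z : Finset α, x ∉ Z ∧ y ∉ Z ∧ rank r (insert x Z) < rank r (insert y Z)) →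
    sp (ξ r) x y

/-- Independence from the worst set. -/
def IndepWorstSet {α : Type*} (ξ : SRF α) : Prop :=
  ∀ r r' : Finset α → Finset α → Prop,
    (∀ X : Finset α, rank r X < maxRank r → rank r' X = rank r X) →
    (∀ X : Finset α, rank r X = maxRank r → maxRank r ≤ rank r' X) →
    ∀ x y : α, sp (ξ r) x y → sp (ξ r') x y

/-- Dominating set axiom. -/
def DominatingSet {α : Type*} (ξ : SRF α) : Prop :=
  ∀ r : Finset α → Finset α → Prop, ∀ x y : α,
    (∃ X : Finset α, x ∈ X ∧ ∀ Y : Finset α, y ∈ Y → strictPart r X Y) →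
    sp (ξ r) x y
/-- The internal conflicts of a set. -/
def CFset {α : Type*} (att : α → α → Prop) (E : Finset α) : Set (α × α) :=
  {p : α × α | p.1 ∈ E ∧ p.2 ∈ E ∧ att p.1 p.2}

/-- Conflict-free base extension ranking. -/
def rcf {α : Type*} (att : α → α → Prop) (E E' : Finset α) : Prop :=
  CFset att E ⊆ CFset att E'

/-- Rank `k`-super majority for a social ranking function. -/
def RankSuperMaj {α : Type*} [Fintype α] [DecidableEq α] (k : ℕ) (ξ : SRF α) : Prop :=
  ∀ (r : Finset α → Finset α → Prop) (x y : α),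
    k * {Z : Finset α | x ∉ Z ∧ y ∉ Z ∧
          rank r (insert y Z) < rank r (insert x Z)}.ncard
      < {Z : Finset α | x ∉ Z ∧ y ∉ Z ∧
          rank r (insert x Z) < rank r (insert y Z)}.ncard →
    ξ r x y

/-- cf-Compatibility of the family `ξ` combined with r-cf. -/
def CfCompat (ξ : ∀ n : ℕ, SRF (Fin n)) : Prop :=
  ∀ (n : ℕ) (att : Fin n → Fin n → Prop) (a b : Fin n),
    ¬ att a a → att b b → sp (ξ n (rcf att)) a b

set_option linter.unusedSectionVars false

section aux
variable {α : Type*} [Fintype α] (att : α → α → Prop)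

lemma strict_card {E F : Finset α} (h : strictPart (rcf att) E F) :
    (CFset att E).ncard < (CFset att F).ncard :=
  Set.ncard_lt_ncard (ssubset_iff_subset_not_subset.mpr ⟨h.1, h.2⟩) (Set.toFinite _)

lemma chain_card : ∀ (l : List (Finset α)) (E X : Finset α),
    List.Chain' (strictPart (rcf att)) (E :: (l ++ [X])) →
    l.length + 1 + (CFset att E).ncard ≤ (CFset att X).ncard := by
  intro l
  induction l with
  | nil =>
    intro E X h
    have := strict_card att (List.isChain_pair.mp h)
    simp only [List.length_nil]
    omega
  | cons F l ih =>
    intro E X h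
    rw [List.cons_append] at h
    change List.IsChain _ _ at h
    rw [List.isChain_cons_cons] at h
    have h1 := strict_card att h.1
    have h2 := ih F X h.2
    simp only [List.length_cons] at *
    omega

lemma chainAbove_le {X : Finset α} {n : ℕ} (h : ChainAbove (rcf att) X n) :
    n ≤ (CFset att X).ncard := by
  obtain ⟨l, hl, hc⟩ := h
  cases l with
  | nil => simp at hl; omega
  | cons E l =>
    have := chain_card att l E X (by simpa using hc)
    simp at hl; omega

lemma bdd (X : Finset α) : BddAbove {n | ChainAbove (rcf att) X n} :=
  ⟨(CFset att X).ncard, fun _ hn => chainAbove_le att hn⟩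

lemma rankGE {X : Finset α} {m : ℕ} (h : ChainAbove (rcf att) X m) :
    m + 1 ≤ rank (rcf att) X :=
  Nat.add_le_add_right (le_csSup (bdd att X) h) 1

lemma chainAbove_zero (X : Finset α) : ChainAbove (rcf att) X 0 :=
  ⟨[], rfl, List.isChain_singleton X⟩

lemma rankLE (X : Finset α) : rank (rcf att) X ≤ (CFset att X).ncard + 1 := by
  have h1 : {n | ChainAbove (rcf att) X n}.Nonempty := ⟨0, chainAbove_zero att X⟩
  exact Nat.add_le_add_right (csSup_le h1 (fun _ hn => chainAbove_le att hn)) 1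

end aux

section construction

def attk (k : ℕ) : Fin (k+4) → Fin (k+4) → Prop :=
  fun x y => (x.val = 1 ∧ y.val = 1) ∨ (2 ≤ x.val ∧ y.val = 0)

variable (k : ℕ)

def A0 : Fin (k+4) := ⟨0, by omega⟩
def A1 : Fin (k+4) := ⟨1, by omega⟩
def A2 : Fin (k+4) := ⟨2, by omega⟩

lemma CF_mono {E F : Finset (Fin (k+4))} (h : E ⊆ F) :
    CFset (attk k) E ⊆ CFset (attk k) F :=
  fun _ hp => ⟨h hp.1, h hp.2.1, hp.2.2⟩

lemma rank_b (Z : Finset (Fin (k+4))) (h0 : A0 k ∉ Z) :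
    rank (rcf (attk k)) (insert (A1 k) Z) = 2 := by
  have hub : CFset (attk k) (insert (A1 k) Z) ⊆ {(A1 k, A1 k)} := by
    rintro ⟨p, q⟩ ⟨hp, hq, h⟩
    rcases h with ⟨h1, h2⟩ | ⟨h1, h2⟩
    · simp only [Set.mem_singleton_iff, Prod.mk.injEq]
      exact ⟨Fin.ext h1, Fin.ext h2⟩
    · exfalso
      have hq0 : q = A0 k := Fin.ext h2
      subst hq0
      rcases Finset.mem_insert.mp hq with h | h
      · exact absurd (congrArg Fin.val h) (by simp [A0, A1])
      · exact h0 h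
  have hc1 : (CFset (attk k) (insert (A1 k) Z)).ncard ≤ 1 := by
    calc (CFset (attk k) (insert (A1 k) Z)).ncard
        ≤ ({(A1 k, A1 k)} : Set _).ncard :=
          Set.ncard_le_ncard hub (Set.finite_singleton _)
      _ = 1 := Set.ncard_singleton _
  have hlb : ChainAbove (rcf (attk k)) (insert (A1 k) Z) 1 := by
    refine ⟨[∅], rfl, ?_⟩
    show List.Chain' _ [∅, insert (A1 k) Z]
    apply List.isChain_pair.mpr
    constructor
    · rintro p hp
      exact absurd hp.1 (Finset.notMem_empty _)
    · intro hsub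
      have hmem : (A1 k, A1 k) ∈ CFset (attk k) (insert (A1 k) Z) :=
        ⟨Finset.mem_insert_self _ _, Finset.mem_insert_self _ _, Or.inl ⟨rfl, rfl⟩⟩
      exact absurd (hsub hmem).1 (Finset.notMem_empty _)
  have h2 := rankGE (attk k) hlb
  have h3 := rankLE (attk k) (insert (A1 k) Z)
  omega

lemma rank_a_ge2 (Z : Finset (Fin (k+4))) (h0 : A0 k ∉ Z) (h1 : A1 k ∉ Z)
    (hne : Z.Nonempty) : 2 ≤ rank (rcf (attk k)) (insert (A0 k) Z) := by
  obtain ⟨c, hc⟩ := hne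
  have hcv : 2 ≤ c.val := by
    have e0 : c ≠ A0 k := fun h => h0 (h ▸ hc)
    have e1 : c ≠ A1 k := fun h => h1 (h ▸ hc)
    have e0' : c.val ≠ 0 := fun h => e0 (Fin.ext h)
    have e1' : c.val ≠ 1 := fun h => e1 (Fin.ext h)
    omega
  have hlb : ChainAbove (rcf (attk k)) (insert (A0 k) Z) 1 := by
    refine ⟨[∅], rfl, ?_⟩
    show List.Chain' _ [∅, insert (A0 k) Z]
    apply List.isChain_pair.mpr
    constructor
    · rintro p hp
      exact absurd hp.1 (Finset.notMem_empty _)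
    · intro hsub
      have hmem : (c, A0 k) ∈ CFset (attk k) (insert (A0 k) Z) :=
        ⟨Finset.mem_insert_of_mem hc, Finset.mem_insert_self _ _, Or.inr ⟨hcv, rfl⟩⟩
      exact absurd (hsub hmem).1 (Finset.notMem_empty _)
  exact rankGE (attk k) hlb

lemma rank_a_ge3 (j : ℕ) (hj : 3 ≤ j) (hj2 : j < k+4) :
    3 ≤ rank (rcf (attk k)) (insert (A0 k) {A2 k, ⟨j, hj2⟩}) := by
  set cj : Fin (k+4) := ⟨j, hj2⟩ with hcj
  have hlb : ChainAbove (rcf (attk k)) (insert (A0 k) {A2 k, cj}) 2 := by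
    refine ⟨[∅, {A0 k, A2 k}], rfl, ?_⟩
    show List.Chain' _ [∅, {A0 k, A2 k}, insert (A0 k) {A2 k, cj}]
    apply List.isChain_cons_cons.mpr
    rw [List.isChain_pair]
    refine ⟨⟨fun p hp => absurd hp.1 (Finset.notMem_empty _), ?_⟩, ?_, ?_⟩
    · intro hsub
      have hmem : (A2 k, A0 k) ∈ CFset (attk k) {A0 k, A2 k} :=
        ⟨by simp, by simp, Or.inr ⟨le_refl _, rfl⟩⟩
      exact absurd (hsub hmem).1 (Finset.notMem_empty _)
    · refine CF_mono k ?_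
      intro x hx
      simp only [Finset.mem_insert, Finset.mem_singleton] at hx ⊢
      tauto
    · intro hsub
      have hmem : (cj, A0 k) ∈ CFset (attk k) (insert (A0 k) {A2 k, cj}) := by
        refine ⟨?_, Finset.mem_insert_self _ _, Or.inr ⟨by simp [hcj]; omega, rfl⟩⟩
        simp
      have := (hsub hmem).1
      simp only [Finset.mem_insert, Finset.mem_singleton, Fin.ext_iff, hcj, A0, A2] at this
      omega
  exact rankGE (attk k) hlb

lemma key : ∀ k : ℕ, ∃ (n : ℕ) (att : Fin n → Fin n → Prop) (a b : Fin n),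
      ¬ att a a ∧ att b b ∧
      k * {Z : Finset (Fin n) | a ∉ Z ∧ b ∉ Z ∧
            rank (rcf att) (insert a Z) < rank (rcf att) (insert b Z)}.ncard
        < {Z : Finset (Fin n) | a ∉ Z ∧ b ∉ Z ∧
            rank (rcf att) (insert b Z) < rank (rcf att) (insert a Z)}.ncard := by
  intro k
  refine ⟨k+4, attk k, A0 k, A1 k, ?_, Or.inl ⟨rfl, rfl⟩, ?_⟩
  · rintro (⟨h, -⟩ | ⟨h, -⟩) <;> simp [A0, attk] at h
  · have hS1 : {Z : Finset (Fin (k+4)) | A0 k ∉ Z ∧ A1 k ∉ Z ∧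
        rank (rcf (attk k)) (insert (A0 k) Z) < rank (rcf (attk k)) (insert (A1 k) Z)}
        ⊆ {(∅ : Finset (Fin (k+4)))} := by
      rintro Z ⟨h0, h1, hlt⟩
      simp only [Set.mem_singleton_iff]
      by_contra hne
      have hZ : Z.Nonempty := Finset.nonempty_iff_ne_empty.mpr hne
      have g1 := rank_a_ge2 k Z h0 h1 hZ
      have g2 := rank_b k Z h0
      omega
    have hc1 : {Z : Finset (Fin (k+4)) | A0 k ∉ Z ∧ A1 k ∉ Z ∧
        rank (rcf (attk k)) (insert (A0 k) Z) < rank (rcf (attk k)) (insert (A1 k) Z)}.ncard ≤ 1 := by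
      calc _ ≤ ({(∅ : Finset (Fin (k+4)))} : Set _).ncard :=
            Set.ncard_le_ncard hS1 (Set.finite_singleton _)
        _ = 1 := Set.ncard_singleton _
    set f : Fin (k+1) → Finset (Fin (k+4)) :=
      fun j => {A2 k, ⟨j.val + 3, by omega⟩} with hf
    have hfinj : Function.Injective f := by
      intro i j hij
      have hm : (⟨i.val + 3, by omega⟩ : Fin (k+4)) ∈ f j := by
        rw [← hij]; simp [hf]
      simp only [hf, Finset.mem_insert, Finset.mem_singleton, Fin.ext_iff, A2] at hm
      exact Fin.ext (by omega)
    have hrange : Set.range f ⊆ {Z : Finset (Fin (k+4)) | A0 k ∉ Z ∧ A1 k ∉ Z ∧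
        rank (rcf (attk k)) (insert (A1 k) Z) < rank (rcf (attk k)) (insert (A0 k) Z)} := by
      rintro _ ⟨j, rfl⟩
      have h0 : A0 k ∉ f j := by
        simp only [hf, Finset.mem_insert, Finset.mem_singleton, Fin.ext_iff, A0, A2]
        omega
      have h1 : A1 k ∉ f j := by
        simp only [hf, Finset.mem_insert, Finset.mem_singleton, Fin.ext_iff, A1, A2]
        omega
      refine ⟨h0, h1, ?_⟩
      have g1 := rank_b k (f j) h0
      have g2 := rank_a_ge3 k (j.val + 3) (by omega) (by omega)
      rw [g1]
      exact lt_of_lt_of_le (by norm_num) g2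
    have hc2 : k + 1 ≤ {Z : Finset (Fin (k+4)) | A0 k ∉ Z ∧ A1 k ∉ Z ∧
        rank (rcf (attk k)) (insert (A1 k) Z) < rank (rcf (attk k)) (insert (A0 k) Z)}.ncard := by
      have hr : (Set.range f).ncard = k + 1 := by
        rw [← Set.image_univ, Set.ncard_image_of_injective _ hfinj, Set.ncard_univ,
          Nat.card_eq_fintype_card, Fintype.card_fin]
      calc k + 1 = (Set.range f).ncard := hr.symm
        _ ≤ _ := Set.ncard_le_ncard hrange (Set.toFinite _)
    calc k * _ ≤ k * 1 := Nat.mul_le_mul_left k hc1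
      _ < k + 1 := by omega
      _ ≤ _ := hc2

end construction

/-- for each `k` there is an AF with a credulously accepted `a` and
rejected `b` where the rank-based evidence overwhelmingly favours `b`; hence no
social ranking function satisfying rank `k`-super majority for every `k` can,
together with r-cf, satisfy cf-Compatibility. -/
theorem stmt14 :
    (∀ k : ℕ, ∃ (n : ℕ) (att : Fin n → Fin n → Prop) (a b : Fin n),
      ¬ att a a ∧ att b b ∧
      k * {Z : Finset (Fin n) | a ∉ Z ∧ b ∉ Z ∧
            rank (rcf att) (insert a Z) < rank (rcf att) (insert b Z)}.ncard
        < {Z : Finset (Fin n) | a ∉ Z ∧ b ∉ Z ∧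
            rank (rcf att) (insert b Z) < rank (rcf att) (insert a Z)}.ncard) ∧
    (∀ ξ : ∀ n : ℕ, SRF (Fin n),
      (∀ (n k : ℕ), RankSuperMaj k (ξ n)) → ¬ CfCompat ξ) := by
  constructor
  · exact key
  · intro xi hmaj hcf
    obtain ⟨n, att, a, b, hna, hbb, hcount⟩ := key 0
    have hsp := hcf n att a b hna hbb
    have e1 : {Z : Finset (Fin n) | b ∉ Z ∧ a ∉ Z ∧
        rank (rcf att) (insert a Z) < rank (rcf att) (insert b Z)}
        = {Z : Finset (Fin n) | a ∉ Z ∧ b ∉ Z ∧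
        rank (rcf att) (insert a Z) < rank (rcf att) (insert b Z)} := by
      ext Z; simp only [Set.mem_setOf_eq]; tauto
    have e2 : {Z : Finset (Fin n) | b ∉ Z ∧ a ∉ Z ∧
        rank (rcf att) (insert b Z) < rank (rcf att) (insert a Z)}
        = {Z : Finset (Fin n) | a ∉ Z ∧ b ∉ Z ∧
        rank (rcf att) (insert b Z) < rank (rcf att) (insert a Z)} := by
      ext Z; simp only [Set.mem_setOf_eq]; tauto
    have hba : xi n (rcf att) b a := by
      apply hmaj n 0 (rcf att) b a
      rw [e1, e2]
      exact hcount
    exact hsp.2 hba
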